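/- arXiv:2504.11556 — 5 statements merged into one kernel-verified Lean document; each statement's English description precedes it below -/
import Mathlib

section
/- Let u : M → ℝ ∪ {±∞} and suppose there exist x₀, y₀ ∈ M and t₀ > 0 such that u(x₀) and T_{t₀}u(y₀) are both finite and T_{t₀}u(y₀) = u(x₀) + c_{t₀}(x₀,y₀). If γ : [0,t₀] → M satisfies c_{t₀}(x₀,y₀) = c_s(x₀,γ(s)) + c_{t-s}(γ(s),γ(t)) + c_{t₀-t}(γ(t),y₀) for all 0 ≤ s ≤ t ≤ t₀ (i.e., γ is a minimizer from x₀ to y₀), then for all 0 ≤ s ≤ t ≤ t₀ one has T_t u(γ(t)) = T_s u(γ(s)) + c_{t-s}(γ(s),γ(t)); that is, γ is Tu-calibrated. -/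
/-!
Along the minimizer the infimum defining `T_t u(γ t)` is attained at `x₀`: if some `y` did
better, adding the finite tail cost `c_{t₀-t}(γ t, y₀)` and using subadditivity would give
`T_{t₀}u(y₀) < u(x₀) + c_{t₀}(x₀, y₀)`. Hence `T_t u(γ t) = u(x₀) + c_t(x₀, γ t)` on `[0, t₀]`,
and the claim follows because `c` is additive along `γ`.
-/

noncomputable section

open scoped Classical

/-- Addition of extended reals with the convention `-∞ + ∞ := +∞`. -/
def laxAdd (a b : EReal) : EReal := if a = ⊥ ∧ b = ⊤ then ⊤ else a + b

/-- The forward Lax–Oleinik operator `T_t u(x) = inf_y (u(y) + c_t(y,x))`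
(convention `-∞ + ∞ := +∞`), with `T_0 u := u`. -/
def laxT {M : Type*} (c : ℝ → M → M → EReal) (t : ℝ) (u : M → EReal) (x : M) : EReal :=
  if t = 0 then u x else ⨅ y : M, laxAdd (u y) (c t y x)

lemma EReal.eq_zero_of_coe_eq_add_add_coe {a : EReal} (ha : 0 ≤ a) {C : ℝ}
    (h : (C : EReal) = a + a + C) : a = 0 := by
  have h2 : a + a + C = 0 + C := by rw [zero_add, ← h]
  rw [(EReal.addLECancellable_coe C).inj_left] at h2
  exact ((add_eq_zero_iff_of_nonneg ha ha).mp h2).1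

lemma EReal.exists_coe_eq_right_of_coe_eq_add {a b : EReal} (ha : a ≠ ⊥) (hb : b ≠ ⊥) {C : ℝ}
    (h : (C : EReal) = a + b) : ∃ d : ℝ, b = d :=
  ⟨b.toReal, (EReal.coe_toReal ((EReal.add_ne_top_iff_ne_top₂ ha hb).mp (h ▸ EReal.coe_ne_top C)).2
    hb).symm⟩

lemma laxAdd_assoc (a b d : EReal) : laxAdd (laxAdd a b) d = laxAdd a (laxAdd b d) := by
  induction a <;> induction b <;> induction d <;> simp [laxAdd, add_assoc, ← EReal.coe_add]

lemma laxAdd_of_ne_bot {a : EReal} (ha : a ≠ ⊥) (b : EReal) : laxAdd a b = a + b := by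
  simp [laxAdd, ha]

lemma laxAdd_of_ne_top (a : EReal) {b : EReal} (hb : b ≠ ⊤) : laxAdd a b = a + b := by
  simp [laxAdd, hb]

lemma laxAdd_top (a : EReal) : laxAdd a ⊤ = ⊤ := by
  induction a <;> simp [laxAdd]

lemma laxAdd_zero (a : EReal) : laxAdd a 0 = a := by
  simp [laxAdd]

lemma add_le_laxAdd (a b : EReal) : a + b ≤ laxAdd a b := by
  unfold laxAdd; split_ifs <;> simp

lemma laxAdd_le_laxAdd_right {b b' : EReal} (hb : b ≤ b') (a : EReal) :
    laxAdd a b ≤ laxAdd a b' := by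
  rcases eq_or_ne a ⊥ with rfl | ha
  · rcases eq_or_ne b' ⊤ with rfl | hb'
    · simp [laxAdd_top]
    · simp [laxAdd, hb', (hb.trans_lt hb'.lt_top).ne]
  · simpa [laxAdd_of_ne_bot ha] using add_le_add_right hb a

lemma laxAdd_coe_le_laxAdd_coe_iff {a b : EReal} (d : ℝ) :
    laxAdd a d ≤ laxAdd b d ↔ a ≤ b := by
  simp only [laxAdd_of_ne_top _ (EReal.coe_ne_top d)]
  exact (EReal.addLECancellable_coe d).add_le_add_iff_right

section LaxOleinik

variable {M : Type*}

lemma laxT_zero (c : ℝ → M → M → EReal) (u : M → EReal) (x : M) : laxT c 0 u x = u x := by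
  simp [laxT]

lemma laxT_le_laxAdd {c : ℝ → M → M → EReal} {t : ℝ} (ht : t ≠ 0) (u : M → EReal) (x y : M) :
    laxT c t u x ≤ laxAdd (u y) (c t y x) := by
  rw [laxT, if_neg ht]
  exact iInf_le _ y

lemma le_laxT {c : ℝ → M → M → EReal} {t : ℝ} (ht : t ≠ 0) {u : M → EReal} {x : M} {a : EReal}
    (h : ∀ y, a ≤ laxAdd (u y) (c t y x)) : a ≤ laxT c t u x := by
  rw [laxT, if_neg ht]
  exact le_iInf h

lemma laxT_eq_laxAdd_of_laxT_add_eq {c : ℝ → M → M → EReal} {u : M → EReal} {t t' : ℝ}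
    (ht : t ≠ 0) (htt' : t + t' ≠ 0) {x z w : M} {d : ℝ} (hd : c t' z w = d)
    (hsub : ∀ y, c (t + t') y w ≤ c t y z + c t' z w)
    (h : laxT c (t + t') u w = laxAdd (laxAdd (u x) (c t x z)) (c t' z w)) :
    laxT c t u z = laxAdd (u x) (c t x z) := by
  rw [hd] at hsub h
  refine le_antisymm (laxT_le_laxAdd ht u z x) (le_laxT ht fun y => ?_)
  rw [← laxAdd_coe_le_laxAdd_coe_iff d, ← h, laxAdd_assoc]
  calc laxT c (t + t') u w ≤ laxAdd (u y) (c (t + t') y w) := laxT_le_laxAdd htt' u w y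
    _ ≤ laxAdd (u y) (laxAdd (c t y z) d) :=
      laxAdd_le_laxAdd_right ((hsub y).trans (add_le_laxAdd _ _)) _

end LaxOleinik

theorem calibrated_curve_general {M : Type*} (c : ℝ → M → M → EReal)
    (hnonneg : ∀ t : ℝ, 0 ≤ t → ∀ x y : M, 0 ≤ c t x y)
    (hsub : ∀ r s : ℝ, 0 ≤ r → 0 ≤ s → ∀ x y z : M,
      c (r + s) x z ≤ c r x y + c s y z)
    (u : M → EReal) (x₀ y₀ : M) (t₀ : ℝ) (ht₀ : 0 < t₀)
    (hTy : ∃ r : ℝ, laxT c t₀ u y₀ = (r : EReal))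
    (hcal : laxT c t₀ u y₀ = laxAdd (u x₀) (c t₀ x₀ y₀))
    (γ : ℝ → M) (hγ0 : γ 0 = x₀)
    (hmin : ∀ s t : ℝ, 0 ≤ s → s ≤ t → t ≤ t₀ →
      c t₀ x₀ y₀ = c s x₀ (γ s) + c (t - s) (γ s) (γ t) + c (t₀ - t) (γ t) y₀) :
    ∀ s t : ℝ, 0 ≤ s → s ≤ t → t ≤ t₀ →
      laxT c t u (γ t) = laxAdd (laxT c s u (γ s)) (c (t - s) (γ s) (γ t)) := by
  have hbot : ∀ t, 0 ≤ t → ∀ x y, c t x y ≠ ⊥ := fun t ht x y =>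
    ne_bot_of_le_ne_bot EReal.zero_ne_bot (hnonneg t ht x y)
  obtain ⟨R, hR⟩ := hTy
  have hCtop : c t₀ x₀ y₀ ≠ ⊤ := fun h => by simp [h, laxAdd_top, hR] at hcal
  lift c t₀ x₀ y₀ to ℝ using ⟨hCtop, hbot t₀ ht₀.le x₀ y₀⟩ with C hC
  have hc0 : c 0 x₀ x₀ = 0 := by
    have h := hmin 0 0 le_rfl le_rfl ht₀.le
    simp only [hγ0, sub_zero, ← hC] at h
    exact EReal.eq_zero_of_coe_eq_add_add_coe (hnonneg 0 le_rfl x₀ x₀) h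
  have hsplit : ∀ t, 0 ≤ t → t ≤ t₀ → (C : EReal) = c t x₀ (γ t) + c (t₀ - t) (γ t) y₀ := by
    intro t ht htt
    simpa [hγ0, hc0] using hmin 0 t le_rfl ht htt
  have htail : ∀ t, 0 ≤ t → t ≤ t₀ → ∃ d : ℝ, c (t₀ - t) (γ t) y₀ = d := fun t ht htt =>
    EReal.exists_coe_eq_right_of_coe_eq_add (hbot _ ht _ _) (hbot _ (by linarith) _ _)
      (hsplit t ht htt)
  have hT : ∀ t, 0 ≤ t → t ≤ t₀ → laxT c t u (γ t) = laxAdd (u x₀) (c t x₀ (γ t)) := by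
    intro t ht htt
    rcases ht.eq_or_lt with rfl | ht
    · rw [laxT_zero, hγ0, hc0, laxAdd_zero]
    obtain ⟨d, hd⟩ := htail t ht.le htt
    refine laxT_eq_laxAdd_of_laxT_add_eq ht.ne' (by simpa using ht₀.ne') hd
      (fun y => hsub _ _ ht.le (by linarith) _ _ _) ?_
    rw [add_sub_cancel, hcal, laxAdd_assoc, hsplit t ht.le htt, laxAdd_of_ne_bot (hbot t ht.le _ _)]
  intro s t hs hst htt
  have hadd : c t x₀ (γ t) = c s x₀ (γ s) + c (t - s) (γ s) (γ t) := by
    obtain ⟨d, hd⟩ := htail t (hs.trans hst) htt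
    have h := (hsplit t (hs.trans hst) htt).symm.trans (hmin s t hs hst htt)
    rwa [hd, (EReal.addLECancellable_coe d).inj_left] at h
  rw [hT t (hs.trans hst) htt, hT s hs (hst.trans htt), hadd, laxAdd_assoc,
    laxAdd_of_ne_bot (hbot s hs _ _)]

/-- Suppose `u(x₀)` and `T_{t₀}u(y₀)` are finite with
`T_{t₀}u(y₀) = u(x₀) + c_{t₀}(x₀,y₀)`, where `c` is subadditive
(`c_{r+s}(x,z) ≤ c_r(x,y) + c_s(y,z)`). If `γ : [0,t₀] → M` is a minimizer from `x₀` to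
`y₀`, i.e. `c_{t₀}(x₀,y₀) = c_s(x₀,γ(s)) + c_{t-s}(γ(s),γ(t)) + c_{t₀-t}(γ(t),y₀)` for all
`0 ≤ s ≤ t ≤ t₀`, then `T_t u(γ(t)) = T_s u(γ(s)) + c_{t-s}(γ(s),γ(t))` for all
`0 ≤ s ≤ t ≤ t₀`; that is, `γ` is `Tu`-calibrated. -/
theorem calibrated_curve {M : Type*} (c : ℝ → M → M → EReal)
    (hnonneg : ∀ t : ℝ, 0 ≤ t → ∀ x y : M, 0 ≤ c t x y)
    (hsub : ∀ r s : ℝ, 0 ≤ r → 0 ≤ s → ∀ x y z : M,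
      c (r + s) x z ≤ c r x y + c s y z)
    (u : M → EReal) (x₀ y₀ : M) (t₀ : ℝ) (ht₀ : 0 < t₀)
    (hux : ∃ r : ℝ, u x₀ = (r : EReal))
    (hTy : ∃ r : ℝ, laxT c t₀ u y₀ = (r : EReal))
    (hcal : laxT c t₀ u y₀ = laxAdd (u x₀) (c t₀ x₀ y₀))
    (γ : ℝ → M) (hγ0 : γ 0 = x₀) (hγt : γ t₀ = y₀)
    (hmin : ∀ s t : ℝ, 0 ≤ s → s ≤ t → t ≤ t₀ →
      c t₀ x₀ y₀ = c s x₀ (γ s) + c (t - s) (γ s) (γ t) + c (t₀ - t) (γ t) y₀) :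
    ∀ s t : ℝ, 0 ≤ s → s ≤ t → t ≤ t₀ →
      laxT c t u (γ t) = laxAdd (laxT c s u (γ s)) (c (t - s) (γ s) (γ t)) :=
  calibrated_curve_general c hnonneg hsub u x₀ y₀ t₀ ht₀ hTy hcal γ hγ0 hmin
end
end

section
/- Let V be a finite-dimensional real vector space with Lorentzian scalar product g, future causal cone C, and fix a linear functional θ ∈ V* with θ(v) ≥ max{2√|g(v,v)|, |v|} for all v ∈ C (for some auxiliary norm |·|). Define L(v) := (θ(v) - √|g(v,v)|)² for v ∈ C and +∞ otherwise, and H(p) := sup_{v ∈ V} (p(v) - L(v)). Then for every p ∈ V* not in the dual cone C* (i.e., p(v₀) > 0 for some v₀ ∈ C), one has H(p) > 0 and the supremum defining H(p) is attained at some v₁ in the interior of C; moreover p = dL(v₁), the derivative of L at v₁. -/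
/-!
Since `L v ≥ ‖v‖² / 4` on the closed cone `C`, the objective `p - L` tends to `-∞`
along `C` and attains its supremum at some `v₁ ∈ C`; shrinking `v₀` shows the supremum
is positive, so `v₁ ≠ 0`. A nonzero causal vector is never `g`-orthogonal to the timelike `X`
(reverse Cauchy–Schwarz in Minkowski coordinates), so `g v₁ X < 0`. If `v₁` were null, then
along `s ↦ v₁ + s² X` the term `√|g v v|` would grow like `s` while everything else moves like
`s²`, so `p - L` would have positive slope `2 θ(v₁) √(-2 g(v₁, X))` at `s = 0`, contradicting
maximality. Hence `v₁` is timelike, an interior point of `C` near which `L` is smooth, and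
Fermat's rule gives `p = dL(v₁)`.
-/

open Real Filter Topology

theorem HasDerivAt.nonpos_of_forall_le {F : ℝ → ℝ} {F' a : ℝ} (hF : HasDerivAt F F' a)
    (hmax : ∀ t > 0, F (a + t) ≤ F a) : F' ≤ 0 :=
  le_of_tendsto hF.tendsto_slope_zero_right <| eventually_nhdsWithin_of_forall fun t ht =>
    smul_nonpos_of_nonneg_of_nonpos (inv_nonneg.2 ht.le) (sub_nonpos.2 (hmax t ht))

theorem hasDerivAt_sub_sq_sub_mul_sqrt (a₀ a₁ α β c d : ℝ) (hc : 0 < c) :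
    HasDerivAt (fun s : ℝ => a₀ + s ^ 2 * a₁ - (α + s ^ 2 * β - s * √(c + d * s ^ 2)) ^ 2)
      (2 * α * √c) 0 := by
  have hsq : HasDerivAt (fun s : ℝ => s ^ 2) 0 0 := by simpa using hasDerivAt_pow 2 (0 : ℝ)
  have hroot : HasDerivAt (fun s : ℝ => √(c + d * s ^ 2)) 0 0 := by
    simpa using ((hsq.const_mul d).const_add c).sqrt (by simp [hc.ne'])
  have hinner := ((hsq.mul_const β).const_add α).sub ((hasDerivAt_id' 0).mul hroot)
  exact (((hsq.mul_const a₁).const_add a₀).sub (hinner.pow 2)).congr_deriv (by simp)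

theorem DifferentiableAt.hasFDerivAt_of_isLocalMax_sub {E : Type*} [NormedAddCommGroup E]
    [NormedSpace ℝ E] {L : E → ℝ} {p : E →L[ℝ] ℝ} {x : E} (hL : DifferentiableAt ℝ L x)
    (hmax : IsLocalMax (fun v => p v - L v) x) : HasFDerivAt L p x := by
  have h := hmax.hasFDerivAt_eq_zero (p.hasFDerivAt.sub hL.hasFDerivAt)
  exact sub_eq_zero.1 h ▸ hL.hasFDerivAt

theorem LinearMap.apply_eq_sum_of_basis_diagonal {ι R M : Type*} [Fintype ι] [DecidableEq ι]
    [CommRing R] [AddCommGroup M] [Module R M] (B : M →ₗ[R] M →ₗ[R] R)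
    (b : Module.Basis ι R M) (σ : ι → R)
    (hB : ∀ i j, B (b i) (b j) = if i = j then σ i else 0) (x y : M) :
    B x y = ∑ i, σ i * (b.repr x i * b.repr y i) := by
  conv_lhs => rw [← b.sum_repr x, ← b.sum_repr y]
  simp only [map_sum, map_smul, LinearMap.coe_sum, Finset.sum_apply, LinearMap.smul_apply,
    smul_eq_mul, hB, mul_ite, mul_zero, Finset.sum_ite_eq', Finset.mem_univ, if_true]
  exact Finset.sum_congr rfl fun i _ => by ring

theorem LinearMap.differentiable_apply_self {V : Type*} [NormedAddCommGroup V] [NormedSpace ℝ V]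
    [FiniteDimensional ℝ V] (g : V →ₗ[ℝ] V →ₗ[ℝ] ℝ) : Differentiable ℝ fun v => g v v := by
  let B : V →L[ℝ] V →L[ℝ] ℝ := LinearMap.toContinuousLinearMap
    ((LinearMap.toContinuousLinearMap : (V →ₗ[ℝ] ℝ) ≃ₗ[ℝ] (V →L[ℝ] ℝ)).toLinearMap ∘ₗ g)
  change Differentiable ℝ fun v => B v v
  fun_prop

def minkowskiForm (n : ℕ) (x y : Fin n → ℝ) : ℝ :=
  ∑ i : Fin n, (if (i : ℕ) = 0 then (-1 : ℝ) else 1) * (x i * y i)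

theorem minkowskiForm_succ {m : ℕ} (x y : Fin (m + 1) → ℝ) :
    minkowskiForm (m + 1) x y = -(x 0 * y 0) + ∑ i : Fin m, x i.succ * y i.succ := by
  simp [minkowskiForm, Fin.sum_univ_succ]

theorem eq_zero_of_minkowskiForm_eq_zero {n : ℕ} {x y : Fin n → ℝ}
    (hx : minkowskiForm n x x ≤ 0) (hy : minkowskiForm n y y < 0)
    (hxy : minkowskiForm n x y = 0) : x = 0 := by
  cases n with
  | zero => simp [minkowskiForm] at hy
  | succ m =>
    rw [minkowskiForm_succ] at hx hy hxy
    have hCS := Finset.sum_mul_sq_le_sq_mul_sq Finset.univ (fun i : Fin m => x i.succ)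
      (fun i => y i.succ)
    simp only [← pow_two] at hx hy hCS
    set A := ∑ i : Fin m, x i.succ ^ 2
    set B := ∑ i : Fin m, y i.succ ^ 2
    have hB : 0 ≤ B := Finset.sum_nonneg fun i _ => sq_nonneg _
    have hx0 : x 0 = 0 := by
      have : x 0 ^ 2 * y 0 ^ 2 ≤ x 0 ^ 2 * B := calc
        x 0 ^ 2 * y 0 ^ 2 = (∑ i : Fin m, x i.succ * y i.succ) ^ 2 := by
          rw [← mul_pow]; congr 1; linarith
        _ ≤ A * B := hCS
        _ ≤ x 0 ^ 2 * B := by gcongr; linarith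
      exact pow_eq_zero_iff two_ne_zero |>.1 <| le_antisymm (by nlinarith) (sq_nonneg _)
    have hA : A = 0 :=
      le_antisymm (by simpa [hx0] using hx) (Finset.sum_nonneg fun i _ => sq_nonneg _)
    have hsucc : ∀ i : Fin m, x i.succ = 0 := fun i =>
      pow_eq_zero_iff two_ne_zero |>.1 <|
        (Finset.sum_eq_zero_iff_of_nonneg fun i _ => sq_nonneg _).1 hA i (Finset.mem_univ i)
    funext i
    exact Fin.cases hx0 hsucc i

theorem apply_ne_zero_of_causal_of_timelike {V : Type*} [AddCommGroup V] [Module ℝ V] {n : ℕ}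
    {g : V →ₗ[ℝ] V →ₗ[ℝ] ℝ} {b : Module.Basis (Fin n) ℝ V}
    (hsig : ∀ i j, g (b i) (b j) =
      if i = j then (if (i : ℕ) = 0 then (-1 : ℝ) else 1) else 0)
    {v X : V} (hv : g v v ≤ 0) (hv0 : v ≠ 0) (hX : g X X < 0) : g v X ≠ 0 := by
  have hg : ∀ x y, g x y = minkowskiForm n (b.repr x) (b.repr y) :=
    g.apply_eq_sum_of_basis_diagonal b _ hsig
  intro hvX
  rw [hg] at hv hX hvX
  exact hv0 <| b.repr.map_eq_zero_iff.1 <| DFunLike.coe_injective <|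
    eq_zero_of_minkowskiForm_eq_zero hv hX hvX

section Cone

variable {V : Type*} [AddCommGroup V] [Module ℝ V]

def futureCausalCone (g : V →ₗ[ℝ] V →ₗ[ℝ] ℝ) (X : V) : Set V := {v | g v v ≤ 0 ∧ g v X ≤ 0}

variable {g : V →ₗ[ℝ] V →ₗ[ℝ] ℝ} {X : V}

theorem setOf_eq_zero_or_causal_eq_futureCausalCone :
    {v | v = 0 ∨ (g v v ≤ 0 ∧ v ≠ 0 ∧ g v X ≤ 0)} = futureCausalCone g X := by
  ext v
  by_cases hv : v = 0 <;> simp [futureCausalCone, hv]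

theorem smul_mem_futureCausalCone {v : V} (hv : v ∈ futureCausalCone g X) {t : ℝ}
    (ht : 0 ≤ t) : t • v ∈ futureCausalCone g X := by
  refine ⟨?_, ?_⟩ <;> simp only [map_smul, LinearMap.smul_apply, smul_eq_mul]
  exacts [mul_nonpos_of_nonneg_of_nonpos ht (mul_nonpos_of_nonneg_of_nonpos ht hv.1),
    mul_nonpos_of_nonneg_of_nonpos ht hv.2]

theorem apply_add_smul_self (hsymm : ∀ v w, g v w = g w v) (v : V) (t : ℝ) :
    g (v + t • X) (v + t • X) = g v v + 2 * t * g v X + t ^ 2 * g X X := by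
  simp only [map_add, map_smul, LinearMap.add_apply, LinearMap.smul_apply, smul_eq_mul,
    hsymm X v]
  ring

theorem add_smul_mem_futureCausalCone (hsymm : ∀ v w, g v w = g w v) (hX : g X X < 0)
    {v : V} (hv : v ∈ futureCausalCone g X) {t : ℝ} (ht : 0 ≤ t) :
    v + t • X ∈ futureCausalCone g X := by
  refine ⟨?_, ?_⟩
  · rw [apply_add_smul_self hsymm]
    nlinarith [hv.1, hv.2]
  · simp only [map_add, map_smul, LinearMap.add_apply, LinearMap.smul_apply, smul_eq_mul]
    nlinarith [hv.2]

end Cone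

section TopologyOfCone

variable {V : Type*} [NormedAddCommGroup V] [NormedSpace ℝ V] [FiniteDimensional ℝ V]
  {g : V →ₗ[ℝ] V →ₗ[ℝ] ℝ} {X : V}

theorem isClosed_futureCausalCone : IsClosed (futureCausalCone g X) :=
  (isClosed_le g.differentiable_apply_self.continuous continuous_const).inter
    (isClosed_le (g.flip X).continuous_of_finiteDimensional continuous_const)

theorem mem_interior_futureCausalCone {v : V} (hv : g v v < 0) (hvX : g v X < 0) :
    v ∈ interior (futureCausalCone g X) := by
  have hopen : IsOpen {w | g w w < 0 ∧ g w X < 0} :=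
    (isOpen_lt g.differentiable_apply_self.continuous continuous_const).inter
      (isOpen_lt (g.flip X).continuous_of_finiteDimensional continuous_const)
  exact interior_maximal (fun w hw => And.intro hw.1.le hw.2.le) hopen
    (show v ∈ {w | g w w < 0 ∧ g w X < 0} from ⟨hv, hvX⟩)

end TopologyOfCone

section Lagrangian

variable {V : Type*} [NormedAddCommGroup V] [NormedSpace ℝ V]

noncomputable def lagrangian (θ : V →L[ℝ] ℝ) (g : V →ₗ[ℝ] V →ₗ[ℝ] ℝ) (v : V) : ℝ :=
  (θ v - √|g v v|) ^ 2

variable {θ : V →L[ℝ] ℝ} {g : V →ₗ[ℝ] V →ₗ[ℝ] ℝ}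

theorem lagrangian_smul (v : V) {t : ℝ} (ht : 0 ≤ t) :
    lagrangian θ g (t • v) = t ^ 2 * lagrangian θ g v := by
  have hq : g (t • v) (t • v) = t ^ 2 * g v v := by
    simp only [map_smul, LinearMap.smul_apply, smul_eq_mul]; ring
  rw [lagrangian, lagrangian, hq, abs_mul, abs_of_nonneg (sq_nonneg t), sqrt_mul (sq_nonneg t),
    sqrt_sq ht, map_smul, smul_eq_mul]
  ring

theorem norm_sq_div_four_le_lagrangian {v : V} (hθ : max (2 * √|g v v|) ‖v‖ ≤ θ v) :
    ‖v‖ ^ 2 / 4 ≤ lagrangian θ g v := by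
  have h₁ : 2 * √|g v v| ≤ θ v := (le_max_left _ _).trans hθ
  have h₂ : ‖v‖ ≤ θ v := (le_max_right _ _).trans hθ
  have h₃ : 0 ≤ √|g v v| := sqrt_nonneg _
  rw [lagrangian]
  nlinarith [norm_nonneg v]

variable [FiniteDimensional ℝ V]

theorem continuous_lagrangian : Continuous (lagrangian θ g) :=
  (θ.continuous.sub g.differentiable_apply_self.continuous.abs.sqrt).pow 2

theorem differentiableAt_lagrangian {v : V} (hv : g v v < 0) :
    DifferentiableAt ℝ (lagrangian θ g) v := by
  have hφ : DifferentiableAt ℝ (fun w => (θ w - √(-g w w)) ^ 2) v :=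
    (θ.differentiableAt.sub ((g.differentiable_apply_self v).neg.sqrt (by simpa using hv.ne))).pow 2
  refine hφ.congr_of_eventuallyEq ?_
  filter_upwards [(isOpen_lt g.differentiable_apply_self.continuous continuous_const).mem_nhds hv]
    with w hw
  rw [lagrangian, abs_of_neg hw]

end Lagrangian

section Hamiltonian

variable {V : Type*} [NormedAddCommGroup V] [NormedSpace ℝ V] {g : V →ₗ[ℝ] V →ₗ[ℝ] ℝ} {X : V}
  {θ p : V →L[ℝ] ℝ}

theorem exists_pos_sub_lagrangian {v₀ : V} (hv₀ : v₀ ∈ futureCausalCone g X) (hp : 0 < p v₀) :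
    ∃ v ∈ futureCausalCone g X, 0 < p v - lagrangian θ g v := by
  obtain ⟨t, ht, htL⟩ := exists_pos_mul_lt hp (lagrangian θ g v₀)
  refine ⟨t • v₀, smul_mem_futureCausalCone hv₀ ht.le, ?_⟩
  rw [lagrangian_smul v₀ ht.le, map_smul, smul_eq_mul]
  nlinarith

theorem exists_isMaxOn_sub_lagrangian [FiniteDimensional ℝ V]
    (hθ : ∀ v ∈ futureCausalCone g X, max (2 * √|g v v|) ‖v‖ ≤ θ v) :
    ∃ v₁ ∈ futureCausalCone g X,
      IsMaxOn (fun v => p v - lagrangian θ g v) (futureCausalCone g X) v₁ := by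
  have h0 : (0 : V) ∈ futureCausalCone g X := by simp [futureCausalCone]
  refine (p.continuous.sub continuous_lagrangian).continuousOn.exists_isMaxOn'
    isClosed_futureCausalCone h0 ?_
  -- `p v - L v ≤ ‖p‖ ‖v‖ - ‖v‖² / 4 ≤ 0` as soon as `‖v‖ ≥ 4 ‖p‖`
  filter_upwards [(tendsto_norm_cocompact_atTop.eventually_ge_atTop (4 * ‖p‖)).filter_mono
    inf_le_left, mem_inf_of_right (mem_principal_self _)] with v hv hvC
  have hL := norm_sq_div_four_le_lagrangian (hθ v hvC)
  have hp := (le_abs_self (p v)).trans (p.le_opNorm v)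
  have hL0 : lagrangian θ g 0 = 0 := by simp [lagrangian]
  rw [Pi.sub_apply, Pi.sub_apply, map_zero, hL0]
  nlinarith [norm_nonneg v]

theorem apply_self_lt_zero_of_isMaxOn_sub_lagrangian (hsymm : ∀ v w, g v w = g w v)
    (hX : g X X < 0) {v₁ : V} (hv₁ : v₁ ∈ futureCausalCone g X) (hθv₁ : 0 < θ v₁)
    (hv₁X : g v₁ X < 0)
    (hmax : IsMaxOn (fun v => p v - lagrangian θ g v) (futureCausalCone g X) v₁) :
    g v₁ v₁ < 0 := by
  refine hv₁.1.lt_of_ne fun hnull => ?_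
  have hc : 0 < -2 * g v₁ X := by linarith
  have hcurve : ∀ s ≥ (0 : ℝ),
      p v₁ + s ^ 2 * p X - (θ v₁ + s ^ 2 * θ X - s * √(-2 * g v₁ X + -g X X * s ^ 2)) ^ 2 =
        p (v₁ + s ^ 2 • X) - lagrangian θ g (v₁ + s ^ 2 • X) := by
    intro s hs
    have hq : |g (v₁ + s ^ 2 • X) (v₁ + s ^ 2 • X)| =
        s ^ 2 * (-2 * g v₁ X + -g X X * s ^ 2) := by
      rw [apply_add_smul_self hsymm, hnull, abs_of_nonpos (by nlinarith)]; ring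
    rw [lagrangian, hq, sqrt_mul (sq_nonneg s), sqrt_sq hs]
    simp only [map_add, map_smul, smul_eq_mul]
  have hslope := (hasDerivAt_sub_sq_sub_mul_sqrt (p v₁) (p X) (θ v₁) (θ X) _ (-g X X)
    hc).nonpos_of_forall_le fun s hs => by
      simp only [zero_add]
      rw [hcurve s hs.le, hcurve 0 le_rfl]
      simpa using hmax (add_smul_mem_futureCausalCone hsymm hX hv₁ (sq_nonneg s))
  have : 0 < 2 * θ v₁ * √(-2 * g v₁ X) := by positivity
  linarith

end Hamiltonian

theorem hamiltonian_sup_attained_general {V : Type*} [NormedAddCommGroup V] [NormedSpace ℝ V]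
    [FiniteDimensional ℝ V] (n : ℕ)
    (g : V →ₗ[ℝ] V →ₗ[ℝ] ℝ) (hsymm : ∀ v w, g v w = g w v)
    (b : Module.Basis (Fin n) ℝ V)
    (hsig : ∀ i j, g (b i) (b j) =
      if i = j then (if (i : ℕ) = 0 then (-1 : ℝ) else 1) else 0)
    (X : V) (hX : g X X < 0)
    (C : Set V) (hC : C = {v | v = 0 ∨ (g v v ≤ 0 ∧ v ≠ 0 ∧ g v X ≤ 0)})
    (θ : V →L[ℝ] ℝ)
    (hθ : ∀ v ∈ C, max (2 * Real.sqrt |g v v|) ‖v‖ ≤ θ v)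
    (L : V → ℝ) (hL : ∀ v, L v = (θ v - Real.sqrt |g v v|) ^ 2)
    (p : V →L[ℝ] ℝ) (hp : ∃ v₀ ∈ C, 0 < p v₀)
    (H : ℝ) (hH : IsLUB {r : ℝ | ∃ v ∈ C, r = p v - L v} H) :
    0 < H ∧ ∃ v₁ ∈ interior C, H = p v₁ - L v₁ ∧ HasFDerivAt L p v₁ := by
  obtain rfl : L = lagrangian θ g := funext hL
  rw [setOf_eq_zero_or_causal_eq_futureCausalCone] at hC
  subst hC
  obtain ⟨v₁, hv₁, hmax⟩ := exists_isMaxOn_sub_lagrangian (p := p) hθ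
  have hHv₁ : H = p v₁ - lagrangian θ g v₁ :=
    hH.unique (IsGreatest.isLUB ⟨⟨v₁, hv₁, rfl⟩, by rintro _ ⟨v, hv, rfl⟩; exact hmax hv⟩)
  have hHpos : 0 < H := by
    obtain ⟨v₀, hv₀, hpv₀⟩ := hp
    obtain ⟨v, hv, hpos⟩ := exists_pos_sub_lagrangian (θ := θ) hv₀ hpv₀
    exact hpos.trans_le (hH.1 ⟨v, hv, rfl⟩)
  have hv₁0 : v₁ ≠ 0 := by
    rintro rfl
    simp [lagrangian] at hHv₁
    linarith
  have hθv₁ : 0 < θ v₁ := (norm_pos_iff.2 hv₁0).trans_le ((le_max_right _ _).trans (hθ v₁ hv₁))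
  have hv₁X : g v₁ X < 0 :=
    hv₁.2.lt_of_ne (apply_ne_zero_of_causal_of_timelike hsig hv₁.1 hv₁0 hX)
  have hv₁v₁ := apply_self_lt_zero_of_isMaxOn_sub_lagrangian hsymm hX hv₁ hθv₁ hv₁X hmax
  have hint := mem_interior_futureCausalCone hv₁v₁ hv₁X
  exact ⟨hHpos, v₁, hint, hHv₁, (differentiableAt_lagrangian hv₁v₁).hasFDerivAt_of_isLocalMax_sub
    (hmax.isLocalMax (mem_interior_iff_mem_nhds.1 hint))⟩

/-- Let `V` be a finite-dimensional real vector space with a Lorentzian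
scalar product `g` (signature `(-,+,...,+)`, time-oriented by `X`), future causal cone `C`
(including `0`), and `θ ∈ V*` with `θ(v) ≥ max (2√|g(v,v)|) ‖v‖` for all `v ∈ C`. Let
`L(v) := (θ(v) - √|g(v,v)|)²` (the finite value of the Lagrangian; `L = +∞` off `C`, so the
Hamiltonian `H(p) = sup_v (p(v) - L(v))` is the supremum over `v ∈ C`). Then for every
`p ∈ V*` not in the dual cone `C*` (i.e. `p(v₀) > 0` for some `v₀ ∈ C`): `H(p) > 0`, the
supremum defining `H(p)` is attained at some `v₁` in the interior of `C`, and `p = dL(v₁)`. -/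
theorem hamiltonian_sup_attained {V : Type*} [NormedAddCommGroup V] [NormedSpace ℝ V]
    [FiniteDimensional ℝ V] (n : ℕ) (hn : 2 ≤ n)
    (g : V →ₗ[ℝ] V →ₗ[ℝ] ℝ) (hsymm : ∀ v w, g v w = g w v)
    (b : Module.Basis (Fin n) ℝ V)
    (hsig : ∀ i j, g (b i) (b j) =
      if i = j then (if (i : ℕ) = 0 then (-1 : ℝ) else 1) else 0)
    (X : V) (hX : g X X < 0)
    (C : Set V) (hC : C = {v | v = 0 ∨ (g v v ≤ 0 ∧ v ≠ 0 ∧ g v X ≤ 0)})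
    (θ : V →L[ℝ] ℝ)
    (hθ : ∀ v ∈ C, max (2 * Real.sqrt |g v v|) ‖v‖ ≤ θ v)
    (L : V → ℝ) (hL : ∀ v, L v = (θ v - Real.sqrt |g v v|) ^ 2)
    (p : V →L[ℝ] ℝ) (hp : ∃ v₀ ∈ C, 0 < p v₀)
    (H : ℝ) (hH : IsLUB {r : ℝ | ∃ v ∈ C, r = p v - L v} H) :
    0 < H ∧ ∃ v₁ ∈ interior C, H = p v₁ - L v₁ ∧ HasFDerivAt L p v₁ :=
  hamiltonian_sup_attained_general n g hsymm b hsig X hX C hC θ hθ L hL p hp H hH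
end

section
/- Let (φ,ψ) be a (c,π)-calibrated pair for an optimal coupling π of (μ₀,μ₁) whose dynamical optimal coupling Π is concentrated on a set A of minimizers γ : [0,1] → M with ψ(γ(1)) - φ(γ(0)) = c(γ(0),γ(1)) and φ(γ(0)), ψ(γ(1)) ∈ ℝ. Then for every γ ∈ A and every t' ∈ [0,1], the function ψ_{t'}(y) := sup_z (ψ(z) - c_{1-t'}(y,z)) satisfies ψ_{t'}(γ(t')) = φ(γ(0)) + c_{t'}(γ(0), γ(t')). -/
noncomputable section

/-- Let `(φ,ψ)` be a `c`-subsolution (part of a `(c,π)`-calibrated pair)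
and let `γ : [0,1] → M` be a curve in the set `A` carrying the dynamical optimal coupling:
an action minimizer with `φ(γ(0)), ψ(γ(1))` real and
`ψ(γ(1)) - φ(γ(0)) = c(γ(0),γ(1))`. Then for every `t' ∈ [0,1]` the function
`ψ_{t'}(y) := sup_z (ψ(z) - c_{1-t'}(y,z))` satisfies
`ψ_{t'}(γ(t')) = φ(γ(0)) + c_{t'}(γ(0),γ(t'))`. -/
theorem backward_evolution_calibrated {M : Type*} (c : ℝ → M → M → EReal)
    (hnonneg : ∀ t : ℝ, 0 ≤ t → ∀ x y : M, 0 ≤ c t x y)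
    (hsub : ∀ r s : ℝ, 0 ≤ r → 0 ≤ s → ∀ x y z : M,
      c (r + s) x z ≤ c r x y + c s y z)
    (φ ψ : M → EReal)
    (hsubsol : ∀ x y : M, ψ y - φ x ≤ c 1 x y)
    (γ : ℝ → M)
    (hφfin : ∃ r : ℝ, φ (γ 0) = (r : EReal))
    (hψfin : ∃ r : ℝ, ψ (γ 1) = (r : EReal))
    (hcal : ψ (γ 1) - φ (γ 0) = c 1 (γ 0) (γ 1))
    (hmin : ∀ t' ∈ Set.Icc (0 : ℝ) 1,
      c t' (γ 0) (γ t') + c (1 - t') (γ t') (γ 1) = c 1 (γ 0) (γ 1)) :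
    ∀ t' ∈ Set.Icc (0 : ℝ) 1,
      (⨆ z : M, (ψ z - c (1 - t') (γ t') z)) = φ (γ 0) + c t' (γ 0) (γ t') := by
  obtain ⟨a, ha⟩ := hφfin
  obtain ⟨b, hb⟩ := hψfin
  intro t' ht'
  obtain ⟨ht0, ht1⟩ := ht'
  have h1t : (0:ℝ) ≤ 1 - t' := by linarith
  have hc1 : c 1 (γ 0) (γ 1) = ((b - a : ℝ) : EReal) := by
    rw [← hcal, ha, hb, ← EReal.coe_sub]
  have hsum : c t' (γ 0) (γ t') + c (1 - t') (γ t') (γ 1) = ((b - a : ℝ) : EReal) := by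
    rw [hmin t' ⟨ht0, ht1⟩, hc1]
  set X := c t' (γ 0) (γ t') with hXdef
  set Y := c (1 - t') (γ t') (γ 1) with hYdef
  have hX0 : 0 ≤ X := hnonneg t' ht0 _ _
  have hY0 : 0 ≤ Y := hnonneg (1 - t') h1t _ _
  have hXb : X ≠ ⊥ := fun h => by simp [h] at hX0
  have hYb : Y ≠ ⊥ := fun h => by simp [h] at hY0
  have hXt : X ≠ ⊤ := by
    intro h
    rw [h, EReal.top_add_of_ne_bot hYb] at hsum
    exact (EReal.coe_ne_top _) hsum.symm
  have hYt : Y ≠ ⊤ := by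
    intro h
    rw [h, EReal.add_top_of_ne_bot hXb] at hsum
    exact (EReal.coe_ne_top _) hsum.symm
  obtain ⟨p, hp⟩ : ∃ p : ℝ, X = (p : EReal) := ⟨X.toReal, (EReal.coe_toReal hXt hXb).symm⟩
  obtain ⟨q, hq⟩ : ∃ q : ℝ, Y = (q : EReal) := ⟨Y.toReal, (EReal.coe_toReal hYt hYb).symm⟩
  have hpq : p + q = b - a := by
    rw [hp, hq, ← EReal.coe_add] at hsum
    exact_mod_cast hsum
  have hgoalRHS : φ (γ 0) + X = ((a + p : ℝ) : EReal) := by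
    rw [ha, hp, ← EReal.coe_add]
  rw [hgoalRHS]
  apply le_antisymm
  · apply iSup_le
    intro z
    have hz : ψ z - φ (γ 0) ≤ c 1 (γ 0) z := hsubsol (γ 0) z
    have hchain : c 1 (γ 0) z ≤ (p : EReal) + c (1 - t') (γ t') z := by
      have h := hsub t' (1 - t') ht0 h1t (γ 0) (γ t') z
      have : t' + (1 - t') = 1 := by ring
      rw [this] at h
      rw [← hp]
      exact h
    have hz2 : ψ z - (a : EReal) ≤ (p : EReal) + c (1 - t') (γ t') z := by
      rw [← ha]; exact hz.trans hchain
    set v := c (1 - t') (γ t') z with hvdef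
    have hv0 : 0 ≤ v := hnonneg (1 - t') h1t _ _
    rcases eq_or_ne v ⊤ with hvt | hvt
    · rw [hvt, EReal.sub_top]
      exact bot_le
    · have hvb : v ≠ ⊥ := fun h => by simp [h] at hv0
      obtain ⟨w, hw⟩ : ∃ w : ℝ, v = (w : EReal) := ⟨v.toReal, (EReal.coe_toReal hvt hvb).symm⟩
      rw [hw] at hz2 ⊢
      rcases eq_or_ne (ψ z) ⊤ with hpt | hpt
      · exfalso
        rw [hpt, EReal.top_sub_coe, ← EReal.coe_add] at hz2
        exact (EReal.coe_ne_top (p + w)) (top_le_iff.mp hz2)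
      rcases eq_or_ne (ψ z) ⊥ with hpb | hpb
      · rw [hpb]
        simp
      obtain ⟨s, hs⟩ : ∃ s : ℝ, ψ z = (s : EReal) := ⟨(ψ z).toReal, (EReal.coe_toReal hpt hpb).symm⟩
      rw [hs] at hz2 ⊢
      rw [← EReal.coe_sub] at hz2 ⊢
      rw [← EReal.coe_add] at hz2
      have : s - a ≤ p + w := by exact_mod_cast hz2
      exact_mod_cast (by linarith : s - w ≤ a + p)
  · refine le_iSup_of_le (γ 1) ?_
    rw [hb, ← hYdef, hq, ← EReal.coe_sub]
    exact_mod_cast (by linarith : a + p ≤ b - q)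
end
end

section
/- Let M be a smooth manifold, U ⊆ M open, and f : U → ℝ a function that is both locally semiconcave and locally semiconvex on U. Then f is C^{1,1}_loc on U, i.e., f is C¹ and in every chart its differential is locally Lipschitz. Conversely, every C^{1,1}_loc function on U is locally semiconcave and locally semiconvex. -/
noncomputable section

open scoped Manifold
open Metric

/-- `f` is locally semiconcave on `V ⊆ ℝⁿ`: around each point of `V` there is a ball
contained in `V` on which `f` is `K`-semiconcave for some `K`. -/
def LocSemiconcaveOn {n : ℕ} (f : EuclideanSpace ℝ (Fin n) → ℝ)
    (V : Set (EuclideanSpace ℝ (Fin n))) : Prop :=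
  ∀ x ∈ V, ∃ ε > (0 : ℝ), ∃ K : ℝ, ball x ε ⊆ V ∧
    ∀ y ∈ ball x ε, ∃ p : EuclideanSpace ℝ (Fin n) →L[ℝ] ℝ,
      ∀ z ∈ ball x ε, f z ≤ f y + p (z - y) + K * ‖z - y‖ ^ 2

/-- `f` is locally semiconvex on `V ⊆ ℝⁿ`. -/
def LocSemiconvexOn {n : ℕ} (f : EuclideanSpace ℝ (Fin n) → ℝ)
    (V : Set (EuclideanSpace ℝ (Fin n))) : Prop :=
  ∀ x ∈ V, ∃ ε > (0 : ℝ), ∃ K : ℝ, ball x ε ⊆ V ∧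
    ∀ y ∈ ball x ε, ∃ p : EuclideanSpace ℝ (Fin n) →L[ℝ] ℝ,
      ∀ z ∈ ball x ε, f y + p (z - y) - K * ‖z - y‖ ^ 2 ≤ f z

/-- `f` is `C^{1,1}_loc` on `V ⊆ ℝⁿ`: it is differentiable on `V` and its derivative is
locally Lipschitz on `V`. -/
def C11On {n : ℕ} (f : EuclideanSpace ℝ (Fin n) → ℝ)
    (V : Set (EuclideanSpace ℝ (Fin n))) : Prop :=
  ∃ f' : EuclideanSpace ℝ (Fin n) → (EuclideanSpace ℝ (Fin n) →L[ℝ] ℝ),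
    (∀ x ∈ V, HasFDerivAt f (f' x) x) ∧
    ∀ x ∈ V, ∃ ε > (0 : ℝ), ∃ K : NNReal, LipschitzOnWith K f' (ball x ε ∩ V)

/-- Chart-wise local semiconcavity of `f : M → ℝ` on `U ⊆ M`. -/
def MLocSemiconcaveOn {n : ℕ} {M : Type*} [TopologicalSpace M]
    [ChartedSpace (EuclideanSpace ℝ (Fin n)) M] (f : M → ℝ) (U : Set M) : Prop :=
  ∀ e ∈ atlas (EuclideanSpace ℝ (Fin n)) M,
    LocSemiconcaveOn (fun z => f (e.symm z)) (e '' (U ∩ e.source))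

/-- Chart-wise local semiconvexity of `f : M → ℝ` on `U ⊆ M`. -/
def MLocSemiconvexOn {n : ℕ} {M : Type*} [TopologicalSpace M]
    [ChartedSpace (EuclideanSpace ℝ (Fin n)) M] (f : M → ℝ) (U : Set M) : Prop :=
  ∀ e ∈ atlas (EuclideanSpace ℝ (Fin n)) M,
    LocSemiconvexOn (fun z => f (e.symm z)) (e '' (U ∩ e.source))

/-- Chart-wise `C^{1,1}_loc` regularity of `f : M → ℝ` on `U ⊆ M`: in every chart, `f` is
`C¹` with locally Lipschitz differential. -/
def MC11On {n : ℕ} {M : Type*} [TopologicalSpace M]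
    [ChartedSpace (EuclideanSpace ℝ (Fin n)) M] (f : M → ℝ) (U : Set M) : Prop :=
  ∀ e ∈ atlas (EuclideanSpace ℝ (Fin n)) M,
    C11On (fun z => f (e.symm z)) (e '' (U ∩ e.source))

/-!
Semiconcavity at `y` gives a supergradient `p` and semiconvexity a subgradient `q`, both with
quadratic error; `q - p` is then a linear map bounded above by a quadratic near `0`, hence zero.
So on small balls `f` has a first-order Taylor expansion whose remainder is uniformly `O(‖z - y‖²)`.
This makes `f` differentiable, and comparing the expansions at two base points `y₁, y₂` at scale
`‖y₁ - y₂‖` shows that the derivative is Lipschitz. Conversely, by the mean value inequality a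
locally Lipschitz derivative yields such a uniform quadratic remainder, which contains both
one-sided bounds. Everything happens chartwise, and the chart images of the open set `U` are open.
-/

open Filter Topology Asymptotics
open scoped NNReal

section NormedSpace

variable {E F : Type*} [NormedAddCommGroup E] [NormedSpace ℝ E]
  [NormedAddCommGroup F] [NormedSpace ℝ F]

theorem hasFDerivAt_of_norm_sub_sub_le_mul_sq {f : E → F} {p : E →L[ℝ] F} {y : E} {C : ℝ}
    (h : ∀ᶠ z in 𝓝 y, ‖f z - f y - p (z - y)‖ ≤ C * ‖z - y‖ ^ 2) : HasFDerivAt f p y := by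
  rw [hasFDerivAt_iff_isLittleO]
  refine (IsBigO.of_bound C ?_).trans_isLittleO (isLittleO_pow_sub_sub y one_lt_two)
  simpa only [norm_pow, norm_norm] using h

theorem ContinuousLinearMap.eq_zero_of_eventually_le_mul_norm_sq {L : E →L[ℝ] ℝ} {C : ℝ}
    (h : ∀ᶠ v in 𝓝 0, L v ≤ C * ‖v‖ ^ 2) : L = 0 := by
  have hle : ∀ v, L v ≤ 0 := fun v => by
    have hsmul : Tendsto (fun t : ℝ => t • v) (𝓝[>] 0) (𝓝 0) := by
      simpa using (tendsto_id.smul_const v).mono_left (nhdsWithin_le_nhds (a := (0 : ℝ)))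
    have hlim : Tendsto (fun t : ℝ => C * t * ‖v‖ ^ 2) (𝓝[>] 0) (𝓝 0) := by
      simpa using ((tendsto_const_nhds.mul tendsto_id).mul_const (‖v‖ ^ 2)).mono_left
        (nhdsWithin_le_nhds (a := (0 : ℝ)))
    refine ge_of_tendsto hlim ?_
    filter_upwards [hsmul.eventually h, self_mem_nhdsWithin] with t ht (htpos : 0 < t)
    rw [map_smul, smul_eq_mul, norm_smul, Real.norm_of_nonneg htpos.le] at ht
    nlinarith
  ext v
  simp only [zero_apply]
  linarith [hle v, hle (-v), L.map_neg v]

theorem ContinuousLinearMap.eq_of_eventually_quadratic_bounds {f : E → ℝ} {p q : E →L[ℝ] ℝ}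
    {y : E} {K₁ K₂ : ℝ} (hp : ∀ᶠ z in 𝓝 y, f z ≤ f y + p (z - y) + K₁ * ‖z - y‖ ^ 2)
    (hq : ∀ᶠ z in 𝓝 y, f y + q (z - y) - K₂ * ‖z - y‖ ^ 2 ≤ f z) : q = p := by
  rw [← sub_eq_zero]
  refine eq_zero_of_eventually_le_mul_norm_sq (C := K₁ + K₂) ?_
  have htendsto : Tendsto (y + ·) (𝓝 0) (𝓝 y) := by
    simpa using (continuous_const_add y).tendsto 0
  filter_upwards [htendsto.eventually hp, htendsto.eventually hq] with v hpv hqv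
  rw [add_sub_cancel_left] at hpv hqv
  rw [sub_apply]
  linarith

theorem norm_sub_apply_le_of_norm_sub_sub_le {f : E → F} {f' : E → E →L[ℝ] F} {s : Set E}
    {K : ℝ} (h : ∀ y ∈ s, ∀ z ∈ s, ‖f z - f y - f' y (z - y)‖ ≤ K * ‖z - y‖ ^ 2)
    {y₁ y₂ z : E} (hy₁ : y₁ ∈ s) (hy₂ : y₂ ∈ s) (hz : z ∈ s) :
    ‖(f' y₁ - f' y₂) (z - y₂)‖ ≤ K * (‖z - y₂‖ ^ 2 + ‖z - y₁‖ ^ 2 + ‖y₂ - y₁‖ ^ 2) := by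
  have hsplit : (f' y₁ - f' y₂) (z - y₂) = (f z - f y₂ - f' y₂ (z - y₂))
      - (f z - f y₁ - f' y₁ (z - y₁)) + (f y₂ - f y₁ - f' y₁ (y₂ - y₁)) := by
    rw [sub_apply, show z - y₁ = (z - y₂) + (y₂ - y₁) by abel, map_add]
    abel
  rw [hsplit]
  refine (norm_add_le _ _).trans ?_
  grw [norm_sub_le, h _ hy₂ _ hz, h _ hy₁ _ hz, h _ hy₁ _ hy₂]
  linarith

theorem lipschitzOnWith_of_norm_sub_sub_le {f : E → ℝ} {f' : E → StrongDual ℝ E} {x : E}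
    {ε : ℝ} {K : ℝ≥0}
    (h : ∀ y ∈ ball x ε, ∀ z ∈ ball x ε, ‖f z - f y - f' y (z - y)‖ ≤ K * ‖z - y‖ ^ 2) :
    LipschitzOnWith (6 * K) f' (ball x (ε / 4)) := by
  refine LipschitzOnWith.of_dist_le_mul fun y₁ hy₁ y₂ hy₂ => ?_
  rcases eq_or_ne y₁ y₂ with rfl | hne
  · simp
  rw [mem_ball] at hy₁ hy₂
  have hsub : ball x (ε / 4) ⊆ ball x ε := ball_subset_ball (by linarith [dist_nonneg.trans_lt hy₁])
  set r := ‖y₂ - y₁‖ with hr_def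
  have hr : 0 < r := norm_pos_iff.2 (sub_ne_zero.2 hne.symm)
  have hr_lt : r < ε / 2 := by
    rw [hr_def, ← dist_eq_norm]
    linarith [dist_triangle_right y₂ y₁ x]
  rw [dist_eq_norm, dist_eq_norm, norm_sub_rev y₁ y₂, ← hr_def]
  calc ‖f' y₁ - f' y₂‖ ≤ 6 * K * r ^ 2 / r :=
        ContinuousLinearMap.opNorm_bound_of_ball_bound hr _ _ fun w hw => ?_
    _ = 6 * K * r := by field_simp
  rw [mem_closedBall_zero_iff] at hw
  have hz : y₂ + w ∈ ball x ε := by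
    rw [mem_ball]
    have : dist (y₂ + w) y₂ = ‖w‖ := by rw [dist_eq_norm, add_sub_cancel_left]
    linarith [dist_triangle (y₂ + w) y₂ x]
  have hbound := norm_sub_apply_le_of_norm_sub_sub_le h (hsub hy₁) (hsub hy₂) hz
  rw [add_sub_cancel_left, add_sub_right_comm] at hbound
  have hsum : ‖w‖ ^ 2 + ‖y₂ - y₁ + w‖ ^ 2 + ‖y₂ - y₁‖ ^ 2 ≤ 6 * r ^ 2 := by
    have : ‖y₂ - y₁ + w‖ ≤ 2 * r := by linarith [norm_add_le (y₂ - y₁) w]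
    nlinarith [norm_nonneg w, norm_nonneg (y₂ - y₁ + w)]
  calc _ ≤ K * (6 * r ^ 2) := hbound.trans (by gcongr)
    _ = (6 * K : ℝ≥0) * r ^ 2 := by push_cast; ring

theorem Convex.norm_sub_sub_le_of_lipschitzOnWith {f : E → F} {f' : E → E →L[ℝ] F}
    {s : Set E} {K : ℝ≥0} (hs : Convex ℝ s) (hf : ∀ y ∈ s, HasFDerivWithinAt f (f' y) s y)
    (hL : LipschitzOnWith K f' s) {y z : E} (hy : y ∈ s) (hz : z ∈ s) :
    ‖f z - f y - f' y (z - y)‖ ≤ K * ‖z - y‖ ^ 2 := by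
  have hseg : segment ℝ y z ⊆ s := hs.segment_subset hy hz
  have bound : ∀ w ∈ segment ℝ y z, ‖f' w - f' y‖ ≤ K * ‖z - y‖ := fun w hw =>
    (hL.norm_sub_le (hseg hw) hy).trans <| by gcongr; exact norm_sub_le_of_mem_segment hw
  calc ‖f z - f y - f' y (z - y)‖ ≤ K * ‖z - y‖ * ‖z - y‖ :=
        (convex_segment y z).norm_image_sub_le_of_norm_hasFDerivWithin_le'
          (fun w hw => (hf w (hseg hw)).mono hseg) bound
          (left_mem_segment ℝ y z) (right_mem_segment ℝ y z)
    _ = K * ‖z - y‖ ^ 2 := by ring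

def LocQuadraticRemainderOn (f : E → F) (V : Set E) : Prop :=
  ∀ x ∈ V, ∃ ε > (0 : ℝ), ∃ K : ℝ≥0, ball x ε ⊆ V ∧
    ∀ y ∈ ball x ε, ∀ z ∈ ball x ε, ‖f z - f y - fderiv ℝ f y (z - y)‖ ≤ K * ‖z - y‖ ^ 2

namespace LocQuadraticRemainderOn

variable {V : Set E}

theorem hasFDerivAt {f : E → F} (h : LocQuadraticRemainderOn f V) {x : E} (hx : x ∈ V) :
    HasFDerivAt f (fderiv ℝ f x) x := by
  obtain ⟨ε, hε, K, -, hK⟩ := h x hx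
  exact hasFDerivAt_of_norm_sub_sub_le_mul_sq <|
    eventually_of_mem (ball_mem_nhds x hε) (hK x (mem_ball_self hε))

theorem exists_lipschitzOnWith_fderiv {f : E → ℝ} (h : LocQuadraticRemainderOn f V) {x : E}
    (hx : x ∈ V) : ∃ ε > (0 : ℝ), ∃ K : ℝ≥0, LipschitzOnWith K (fderiv ℝ f) (ball x ε) := by
  obtain ⟨ε, hε, K, -, hK⟩ := h x hx
  exact ⟨ε / 4, by positivity, 6 * K, lipschitzOnWith_of_norm_sub_sub_le hK⟩

end LocQuadraticRemainderOn

theorem locQuadraticRemainderOn_of_hasFDerivAt {f : E → F} {f' : E → E →L[ℝ] F} {V : Set E}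
    (hV : IsOpen V) (hf : ∀ x ∈ V, HasFDerivAt f (f' x) x)
    (hL : ∀ x ∈ V, ∃ ε > (0 : ℝ), ∃ K : ℝ≥0, LipschitzOnWith K f' (ball x ε ∩ V)) :
    LocQuadraticRemainderOn f V := by
  intro x hx
  obtain ⟨ε₁, hε₁, K, hK⟩ := hL x hx
  obtain ⟨ε₂, hε₂, hV₂⟩ := Metric.isOpen_iff.1 hV x hx
  have hsub : ball x (min ε₁ ε₂) ⊆ ball x ε₁ ∩ V := fun z hz =>
    ⟨ball_subset_ball (min_le_left _ _) hz, hV₂ (ball_subset_ball (min_le_right _ _) hz)⟩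
  refine ⟨min ε₁ ε₂, lt_min hε₁ hε₂, K, hsub.trans Set.inter_subset_right, fun y hy z hz => ?_⟩
  rw [(hf y (hsub hy).2).fderiv]
  exact (convex_ball x _).norm_sub_sub_le_of_lipschitzOnWith
    (fun w hw => (hf w (hsub hw).2).hasFDerivWithinAt) (hK.mono hsub) hy hz

end NormedSpace

section Euclidean

variable {n : ℕ} {f : EuclideanSpace ℝ (Fin n) → ℝ} {V : Set (EuclideanSpace ℝ (Fin n))}

theorem LocSemiconcaveOn.locQuadraticRemainderOn (hcc : LocSemiconcaveOn f V)
    (hcv : LocSemiconvexOn f V) : LocQuadraticRemainderOn f V := by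
  intro x hx
  obtain ⟨ε₁, hε₁, K₁, hV₁, h₁⟩ := hcc x hx
  obtain ⟨ε₂, hε₂, K₂, -, h₂⟩ := hcv x hx
  have hball₁ : ball x (min ε₁ ε₂) ⊆ ball x ε₁ := ball_subset_ball (min_le_left _ _)
  have hball₂ : ball x (min ε₁ ε₂) ⊆ ball x ε₂ := ball_subset_ball (min_le_right _ _)
  set K := (max K₁ K₂).toNNReal
  have hK₁ : K₁ ≤ K := (le_max_left _ _).trans (Real.le_coe_toNNReal _)
  have hK₂ : K₂ ≤ K := (le_max_right _ _).trans (Real.le_coe_toNNReal _)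
  refine ⟨min ε₁ ε₂, lt_min hε₁ hε₂, K, hball₁.trans hV₁, fun y hy => ?_⟩
  obtain ⟨p, hp⟩ := h₁ y (hball₁ hy)
  obtain ⟨q, hq⟩ := h₂ y (hball₂ hy)
  have hnhds : ball x (min ε₁ ε₂) ∈ 𝓝 y := isOpen_ball.mem_nhds hy
  obtain rfl : q = p := ContinuousLinearMap.eq_of_eventually_quadratic_bounds
    (eventually_of_mem hnhds fun z hz => hp z (hball₁ hz))
    (eventually_of_mem hnhds fun z hz => hq z (hball₂ hz))
  have hquad : ∀ z ∈ ball x (min ε₁ ε₂), ‖f z - f y - q (z - y)‖ ≤ K * ‖z - y‖ ^ 2 :=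
    fun z hz => by
      have hupper := hp z (hball₁ hz)
      have hlower := hq z (hball₂ hz)
      rw [Real.norm_eq_abs, abs_le]
      constructor <;> nlinarith [sq_nonneg ‖z - y‖]
  rwa [(hasFDerivAt_of_norm_sub_sub_le_mul_sq (eventually_of_mem hnhds hquad)).fderiv]

namespace LocQuadraticRemainderOn

theorem locSemiconcaveOn (h : LocQuadraticRemainderOn f V) : LocSemiconcaveOn f V := by
  intro x hx
  obtain ⟨ε, hε, K, hV, hK⟩ := h x hx
  refine ⟨ε, hε, K, hV, fun y hy => ⟨fderiv ℝ f y, fun z hz => ?_⟩⟩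
  linarith [le_of_abs_le (hK y hy z hz)]

theorem locSemiconvexOn (h : LocQuadraticRemainderOn f V) : LocSemiconvexOn f V := by
  intro x hx
  obtain ⟨ε, hε, K, hV, hK⟩ := h x hx
  refine ⟨ε, hε, K, hV, fun y hy => ⟨fderiv ℝ f y, fun z hz => ?_⟩⟩
  linarith [neg_le_of_abs_le (hK y hy z hz)]

theorem c11On (h : LocQuadraticRemainderOn f V) : C11On f V := by
  refine ⟨fderiv ℝ f, fun x hx => h.hasFDerivAt hx, fun x hx => ?_⟩
  obtain ⟨ε, hε, K, hK⟩ := h.exists_lipschitzOnWith_fderiv hx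
  exact ⟨ε, hε, K, hK.mono Set.inter_subset_left⟩

end LocQuadraticRemainderOn

theorem c11On_iff_locSemiconcaveOn_and_locSemiconvexOn (hV : IsOpen V) :
    C11On f V ↔ LocSemiconcaveOn f V ∧ LocSemiconvexOn f V := by
  refine ⟨fun ⟨f', hf, hL⟩ => ?_, fun ⟨hcc, hcv⟩ => (hcc.locQuadraticRemainderOn hcv).c11On⟩
  have h := locQuadraticRemainderOn_of_hasFDerivAt hV hf hL
  exact ⟨h.locSemiconcaveOn, h.locSemiconvexOn⟩

end Euclidean

theorem c11_iff_semiconcave_and_semiconvex_general {n : ℕ} {M : Type*} [TopologicalSpace M]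
    [ChartedSpace (EuclideanSpace ℝ (Fin n)) M]
    (U : Set M) (hU : IsOpen U) (f : M → ℝ) :
    (MLocSemiconcaveOn (n := n) f U ∧ MLocSemiconvexOn (n := n) f U) ↔
      MC11On (n := n) f U := by
  simp only [MLocSemiconcaveOn, MLocSemiconvexOn, MC11On, ← forall₂_and]
  refine forall₂_congr fun e _ => (c11On_iff_locSemiconcaveOn_and_locSemiconvexOn ?_).symm
  exact e.isOpen_image_of_subset_source (hU.inter e.open_source) Set.inter_subset_right

/-- Let `M` be a smooth manifold, `U ⊆ M` open and `f : U → ℝ`. Then `f`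
is both locally semiconcave and locally semiconvex on `U` if and only if `f` is
`C^{1,1}_loc` on `U` (i.e. `C¹` with locally Lipschitz differential, in every chart). -/
theorem c11_iff_semiconcave_and_semiconvex {n : ℕ} {M : Type*} [TopologicalSpace M]
    [ChartedSpace (EuclideanSpace ℝ (Fin n)) M]
    [IsManifold (𝓡 n) (⊤ : ℕ∞) M]
    (U : Set M) (hU : IsOpen U) (f : M → ℝ) :
    (MLocSemiconcaveOn (n := n) f U ∧ MLocSemiconvexOn (n := n) f U) ↔
      MC11On (n := n) f U :=
  c11_iff_semiconcave_and_semiconvex_general U hU f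
end
end

section
/- Let V ⊆ ℝⁿ be open, f : V → ℝⁿ a C¹ map, x₀ ∈ V, R > 0 with the closed ball B_R(x₀) ⊆ V. Suppose C ≥ 1 is such that f is C-Lipschitz on B_R(x₀), Df(x₀) is invertible with ‖Df(x₀)⁻¹‖ ≤ C, and ‖Df(x) - Df(x₀)‖ ≤ 1/(4C) for all x ∈ B_R(x₀). Then for any r ≤ R/(2C) and any open set W with B_r(f(x₀)) ⊆ W ⊆ B_{R/(2C)}(f(x₀)), the preimage U := f⁻¹(W) ∩ B_R(x₀) contains B_{r/C}(x₀) and f restricted to U is a diffeomorphism onto W. -/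
/-!
On `closedBall x₀ R` the derivative stays within `1/(4C)` of `A = Df(x₀)`, so by the mean value
inequality `f - A` is `1/(4C)`-Lipschitz there: `f` approximates `A` with a constant below
`‖A⁻¹‖⁻¹ ≥ 1/C`. Hence `f` is injective on the ball, and the iteration behind the inverse
function theorem shows that the image of `closedBall x₀ (2R/3)` contains the ball of radius
`(1/C - 1/(4C)) · 2R/3 = R/(2C)` around `f x₀`, hence `W`. Each `Df(x)` is a
Neumann-series perturbation of `A`, hence invertible, so the local inverse is `C¹`. Finally, the
`C`-Lipschitz bound sends `ball x₀ (r/C)` into `ball (f x₀) r ⊆ W`.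
-/

open Metric Set

theorem LipschitzOnWith.mapsTo_ball {α β : Type*} [PseudoMetricSpace α] [PseudoMetricSpace β]
    {K : NNReal} {f : α → β} {s : Set α} {x : α} {r : ℝ} (hf : LipschitzOnWith K f s)
    (hK : K ≠ 0) (hs : ball x r ⊆ s) : MapsTo f (ball x r) (ball (f x) (K * r)) := by
  intro y hy
  have hxs : x ∈ s := hs (mem_ball_self (pos_of_mem_ball hy))
  calc dist (f y) (f x) ≤ K * dist y x := hf.dist_le_mul y (hs hy) x hxs
    _ < K * r := mul_lt_mul_of_pos_left hy (by positivity)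

theorem OpenPartialHomeomorph.bijOn_preimage_inter_source {X Y : Type*} [TopologicalSpace X]
    [TopologicalSpace Y] (Φ : OpenPartialHomeomorph X Y) {W : Set Y} (hW : W ⊆ Φ.target) :
    BijOn Φ (Φ ⁻¹' W ∩ Φ.source) W :=
  (Φ.invOn.mono inter_subset_right hW).bijOn (fun _ hx => hx.1) fun y hy =>
    ⟨show Φ (Φ.symm y) ∈ W from (Φ.right_inv (hW hy)).symm ▸ hy, Φ.map_target (hW hy)⟩

section Banach

variable {𝕜 : Type*} [NontriviallyNormedField 𝕜] {E F : Type*}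
  [NormedAddCommGroup E] [NormedSpace 𝕜 E] [NormedAddCommGroup F] [NormedSpace 𝕜 F]

theorem ContinuousLinearEquiv.subsingleton_or_lt_nnnorm_symm_inv (A : E ≃L[𝕜] F) {C : ℝ}
    {c : NNReal} (hA : ‖(A.symm : F →L[𝕜] E)‖ ≤ C) (hc : (c : ℝ) < C⁻¹) :
    Subsingleton E ∨ c < ‖(A.symm : F →L[𝕜] E)‖₊⁻¹ := by
  refine A.subsingleton_or_nnnorm_symm_pos.imp_right fun hpos => ?_
  rw [← NNReal.coe_lt_coe, NNReal.coe_inv, coe_nnnorm]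
  exact hc.trans_le (inv_anti₀ hpos hA)

theorem ContinuousLinearEquiv.exists_eq_of_norm_sub_lt_inv [CompleteSpace E]
    (A : E ≃L[𝕜] F) {B : E →L[𝕜] F} {C : ℝ} (hA : ‖(A.symm : F →L[𝕜] E)‖ ≤ C)
    (hB : ‖B - A‖ < C⁻¹) : ∃ e : E ≃L[𝕜] F, (e : E →L[𝕜] F) = B := by
  have hC : 0 < C := inv_pos.mp ((norm_nonneg _).trans_lt hB)
  set T : E →L[𝕜] E := (A.symm : F →L[𝕜] E).comp ((A : E →L[𝕜] F) - B)
  have hT : ‖T‖ < 1 := calc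
    ‖T‖ ≤ ‖(A.symm : F →L[𝕜] E)‖ * ‖B - A‖ := by
      rw [norm_sub_rev]; exact ContinuousLinearMap.opNorm_comp_le _ _
    _ < C * C⁻¹ := mul_lt_mul' hA hB (norm_nonneg _) hC
    _ = 1 := mul_inv_cancel₀ hC.ne'
  -- `B = A ∘ (1 - T)`, and `1 - T` is invertible by the Neumann series.
  refine ⟨(ContinuousLinearEquiv.unitsEquiv 𝕜 E (Units.oneSub T hT)).trans A, ?_⟩
  ext x
  simp [T]

theorem OpenPartialHomeomorph.contDiffOn_symm [CompleteSpace E] {n : WithTop ℕ∞}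
    (Φ : OpenPartialHomeomorph E F) (hΦ : ContDiffOn 𝕜 n Φ Φ.source)
    (hderiv : ∀ x ∈ Φ.source, ∃ e : E ≃L[𝕜] F, HasFDerivAt Φ (e : E →L[𝕜] F) x) :
    ContDiffOn 𝕜 n Φ.symm Φ.target := by
  intro y hy
  have hx := Φ.map_target hy
  obtain ⟨e, he⟩ := hderiv _ hx
  exact (Φ.contDiffAt_symm hy he
    (hΦ.contDiffAt (Φ.open_source.mem_nhds hx))).contDiffWithinAt

theorem ApproximatesLinearOn.surjOn_closedBall_of_norm_symm_le [CompleteSpace E]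
    {f : E → F} {A : E ≃L[𝕜] F} {s : Set E} {c : NNReal} {C ε : ℝ} {b : E}
    (hf : ApproximatesLinearOn f (A : E →L[𝕜] F) s c) (hA : ‖(A.symm : F →L[𝕜] E)‖ ≤ C)
    (ε0 : 0 ≤ ε) (hε : closedBall b ε ⊆ s) :
    SurjOn f (closedBall b ε) (closedBall (f b) ((C⁻¹ - c) * ε)) :=
  hf.surjOn_closedBall_of_nonlinearRightInverse
    { toFun := A.symm
      nnnorm := ⟨C, (norm_nonneg _).trans hA⟩
      bound' := (A.symm : F →L[𝕜] E).le_of_opNorm_le hA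
      right_inv' := A.apply_symm_apply } ε0 hε

theorem ApproximatesLinearOn.closedBall_subset_image_ball [CompleteSpace E]
    {f : E → F} {A : E ≃L[𝕜] F} {c : NNReal} {C R : ℝ} {b : E}
    (hf : ApproximatesLinearOn f (A : E →L[𝕜] F) (closedBall b R) c)
    (hA : ‖(A.symm : F →L[𝕜] E)‖ ≤ C) (hc : (c : ℝ) ≤ 1 / (4 * C)) (hC : 0 < C)
    (hR : 0 < R) :
    closedBall (f b) (R / (2 * C)) ⊆ f '' ball b R := by
  have hsurj := hf.surjOn_closedBall_of_norm_symm_le hA (ε := 2 * R / 3) (by positivity)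
    (closedBall_subset_closedBall (by linarith))
  have hradius : R / (2 * C) ≤ (C⁻¹ - c) * (2 * R / 3) := calc
    R / (2 * C) = (C⁻¹ - 1 / (4 * C)) * (2 * R / 3) := by field_simp; ring
    _ ≤ (C⁻¹ - c) * (2 * R / 3) := by gcongr
  exact fun y hy => image_mono (closedBall_subset_ball (by linarith))
    (hsurj (closedBall_subset_closedBall hradius hy))

end Banach

theorem Convex.approximatesLinearOn_of_norm_sub_le
    {E F : Type*} [NormedAddCommGroup E] [NormedSpace ℝ E] [NormedAddCommGroup F]
    [NormedSpace ℝ F] {f : E → F} {f' : E → E →L[ℝ] F} {A : E →L[ℝ] F} {s : Set E}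
    {c : NNReal} (hs : Convex ℝ s) (hf : ∀ x ∈ s, HasFDerivWithinAt f (f' x) s x)
    (hbound : ∀ x ∈ s, ‖f' x - A‖ ≤ c) : ApproximatesLinearOn f A s c :=
  fun _ hx _ hy => hs.norm_image_sub_le_of_norm_hasFDerivWithin_le' hf hbound hy hx

theorem quantitative_inverse_function_general {n : ℕ}
    (V : Set (EuclideanSpace ℝ (Fin n))) (hV : IsOpen V)
    (f : EuclideanSpace ℝ (Fin n) → EuclideanSpace ℝ (Fin n))
    (hf : ContDiffOn ℝ 1 f V)
    (x₀ : EuclideanSpace ℝ (Fin n))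
    (R : ℝ) (hR : 0 < R) (hball : closedBall x₀ R ⊆ V)
    (C : ℝ) (hC : 1 ≤ C)
    (hlip : LipschitzOnWith (Real.toNNReal C) f (closedBall x₀ R))
    (A : EuclideanSpace ℝ (Fin n) ≃L[ℝ] EuclideanSpace ℝ (Fin n))
    (hA : (A : EuclideanSpace ℝ (Fin n) →L[ℝ] EuclideanSpace ℝ (Fin n)) = fderiv ℝ f x₀)
    (hAinv : ‖(A.symm : EuclideanSpace ℝ (Fin n) →L[ℝ] EuclideanSpace ℝ (Fin n))‖ ≤ C)
    (hDf : ∀ x ∈ closedBall x₀ R, ‖fderiv ℝ f x - fderiv ℝ f x₀‖ ≤ 1 / (4 * C))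
    (r : ℝ) (hrR : r ≤ R / (2 * C))
    (W : Set (EuclideanSpace ℝ (Fin n)))
    (hW1 : ball (f x₀) r ⊆ W) (hW2 : W ⊆ ball (f x₀) (R / (2 * C))) :
    ball x₀ (r / C) ⊆ f ⁻¹' W ∩ ball x₀ R ∧
    ∃ g : EuclideanSpace ℝ (Fin n) → EuclideanSpace ℝ (Fin n),
      ContDiffOn ℝ 1 g W ∧
      Set.BijOn f (f ⁻¹' W ∩ ball x₀ R) W ∧
      (∀ x ∈ f ⁻¹' W ∩ ball x₀ R, g (f x) = x) ∧
      (∀ y ∈ W, f (g y) = y) := by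
  have hC0 : 0 < C := one_pos.trans_le hC
  have hc_lt : 1 / (4 * C) < C⁻¹ := by
    rw [one_div, inv_lt_inv₀ (by positivity) hC0]; linarith
  set c : NNReal := Real.toNNReal (1 / (4 * C))
  have hc : (c : ℝ) = 1 / (4 * C) := Real.coe_toNNReal _ (by positivity)
  have hderiv : ∀ x ∈ closedBall x₀ R, HasFDerivAt f (fderiv ℝ f x) x := fun x hx =>
    ((hf.contDiffAt (hV.mem_nhds (hball hx))).differentiableAt one_ne_zero).hasFDerivAt
  have happrox : ApproximatesLinearOn f
      (A : EuclideanSpace ℝ (Fin n) →L[ℝ] EuclideanSpace ℝ (Fin n)) (closedBall x₀ R) c :=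
    (convex_closedBall x₀ R).approximatesLinearOn_of_norm_sub_le
      (fun x hx => (hderiv x hx).hasFDerivWithinAt) fun x hx => hc ▸ hA ▸ hDf x hx
  let Φ := (happrox.mono_set ball_subset_closedBall).toOpenPartialHomeomorph f (ball x₀ R)
    (A.subsingleton_or_lt_nnnorm_symm_inv hAinv (hc ▸ hc_lt)) isOpen_ball
  have hWΦ : W ⊆ Φ.target := hW2.trans <| ball_subset_closedBall.trans <|
    happrox.closedBall_subset_image_ball hAinv hc.le hC0 hR
  have hDf_equiv : ∀ x ∈ Φ.source,
      ∃ e : EuclideanSpace ℝ (Fin n) ≃L[ℝ] EuclideanSpace ℝ (Fin n),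
        HasFDerivAt Φ (e : EuclideanSpace ℝ (Fin n) →L[ℝ] EuclideanSpace ℝ (Fin n)) x :=
    fun x hx => by
      obtain ⟨e, he⟩ := A.exists_eq_of_norm_sub_lt_inv hAinv
        ((hA ▸ hDf x (ball_subset_closedBall hx)).trans_lt hc_lt)
      exact ⟨e, he ▸ hderiv x (ball_subset_closedBall hx)⟩
  have hinv : InvOn Φ.symm f (f ⁻¹' W ∩ ball x₀ R) W := Φ.invOn.mono inter_subset_right hWΦ
  have hrR' : r / C ≤ R := (div_le_div_of_nonneg_right hrR hC0.le).trans <| by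
    rw [div_div, div_le_iff₀ (by positivity)]
    nlinarith [mul_le_mul hC hC zero_le_one hC0.le]
  have hmaps_ball := hlip.mapsTo_ball (by simpa using hC0)
    (ball_subset_closedBall.trans (closedBall_subset_closedBall hrR'))
  rw [Real.coe_toNNReal C hC0.le, mul_div_cancel₀ r hC0.ne'] at hmaps_ball
  refine ⟨fun x hx => ⟨hW1 (hmaps_ball hx), ball_subset_ball hrR' hx⟩, Φ.symm, ?_,
    Φ.bijOn_preimage_inter_source hWΦ, hinv.1, hinv.2⟩
  exact (Φ.contDiffOn_symm (hf.mono (ball_subset_closedBall.trans hball)) hDf_equiv).mono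
    hWΦ

/-- **quantitative inverse function theorem.** Let `V ⊆ ℝⁿ` be open,
`f : V → ℝⁿ` a `C¹` map, `x₀ ∈ V`, `R > 0` with `closedBall x₀ R ⊆ V`. Suppose `C ≥ 1` is
such that `f` is `C`-Lipschitz on the ball, `Df(x₀)` is invertible with
`‖Df(x₀)⁻¹‖ ≤ C`, and `‖Df(x) - Df(x₀)‖ ≤ 1/(4C)` on the ball. Then for any
`r ≤ R/(2C)` and any open `W` with `ball (f x₀) r ⊆ W ⊆ ball (f x₀) (R/(2C))`, the
preimage `U := f⁻¹(W) ∩ ball x₀ R` contains `ball x₀ (r/C)` and `f` restricted to `U` is a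
(`C¹`-)diffeomorphism onto `W`. -/
theorem quantitative_inverse_function {n : ℕ}
    (V : Set (EuclideanSpace ℝ (Fin n))) (hV : IsOpen V)
    (f : EuclideanSpace ℝ (Fin n) → EuclideanSpace ℝ (Fin n))
    (hf : ContDiffOn ℝ 1 f V)
    (x₀ : EuclideanSpace ℝ (Fin n)) (hx₀ : x₀ ∈ V)
    (R : ℝ) (hR : 0 < R) (hball : closedBall x₀ R ⊆ V)
    (C : ℝ) (hC : 1 ≤ C)
    (hlip : LipschitzOnWith (Real.toNNReal C) f (closedBall x₀ R))
    (A : EuclideanSpace ℝ (Fin n) ≃L[ℝ] EuclideanSpace ℝ (Fin n))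
    (hA : (A : EuclideanSpace ℝ (Fin n) →L[ℝ] EuclideanSpace ℝ (Fin n)) = fderiv ℝ f x₀)
    (hAinv : ‖(A.symm : EuclideanSpace ℝ (Fin n) →L[ℝ] EuclideanSpace ℝ (Fin n))‖ ≤ C)
    (hDf : ∀ x ∈ closedBall x₀ R, ‖fderiv ℝ f x - fderiv ℝ f x₀‖ ≤ 1 / (4 * C))
    (r : ℝ) (hrR : r ≤ R / (2 * C))
    (W : Set (EuclideanSpace ℝ (Fin n))) (hWopen : IsOpen W)
    (hW1 : ball (f x₀) r ⊆ W) (hW2 : W ⊆ ball (f x₀) (R / (2 * C))) :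
    ball x₀ (r / C) ⊆ f ⁻¹' W ∩ ball x₀ R ∧
    ∃ g : EuclideanSpace ℝ (Fin n) → EuclideanSpace ℝ (Fin n),
      ContDiffOn ℝ 1 g W ∧
      Set.BijOn f (f ⁻¹' W ∩ ball x₀ R) W ∧
      (∀ x ∈ f ⁻¹' W ∩ ball x₀ R, g (f x) = x) ∧
      (∀ y ∈ W, f (g y) = y) :=
  quantitative_inverse_function_general V hV f hf x₀ R hR hball C hC hlip A hA hAinv hDf r hrR W hW1
    hW2
end
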